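/- arXiv:2201.13046 — 2 statements merged into one kernel-verified Lean document; each statement's English description precedes it below -/
import Mathlib

section
/- For every simplicial complex X on a finite vertex set, θ(X) ≤ ccn(X), where ccn(X) := min{dim(X[C]) : C is a circuit cover of X} + 1. -/
namespace ThetaPaper

variable {α : Type*} [DecidableEq α]

def delF (X : Finset (Finset α)) (v : α) : Finset (Finset α) :=
  X.filter fun S => v ∉ S

def lkF (X : Finset (Finset α)) (v : α) : Finset (Finset α) :=
  X.filter fun T => v ∉ T ∧ insert v T ∈ X

def vertF (X : Finset (Finset α)) : Finset α := X.biUnion id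

def nonConeF (X : Finset (Finset α)) : Finset α :=
  (vertF X).filter fun v => delF X v ≠ lkF X v

lemma delF_card_lt {X : Finset (Finset α)} {v : α} (h : v ∈ nonConeF X) :
    (delF X v).card < X.card := by
  obtain ⟨A, hA, hvA⟩ := Finset.mem_biUnion.mp (Finset.mem_filter.mp h).1
  refine Finset.card_lt_card ⟨Finset.filter_subset _ _, fun hsub => ?_⟩
  have h2 := hsub hA
  rw [delF, Finset.mem_filter] at h2
  exact h2.2 hvA

lemma lkF_card_lt {X : Finset (Finset α)} {v : α} (h : v ∈ nonConeF X) :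
    (lkF X v).card < X.card := by
  obtain ⟨A, hA, hvA⟩ := Finset.mem_biUnion.mp (Finset.mem_filter.mp h).1
  refine Finset.card_lt_card ⟨Finset.filter_subset _ _, fun hsub => ?_⟩
  have h2 := hsub hA
  rw [lkF, Finset.mem_filter] at h2
  exact h2.2.1 hvA

def theta (X : Finset (Finset α)) : ℕ :=
  if h : (nonConeF X).Nonempty then
    (nonConeF X).attach.inf' (Finset.attach_nonempty_iff.mpr h) fun v =>
      max (theta (delF X v.1)) (theta (lkF X v.1) + 1)
  else 0
termination_by X.card
decreasing_by
  · exact delF_card_lt v.2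
  · exact lkF_card_lt v.2

def IsComplex (X : Finset (Finset α)) : Prop :=
  ∀ A ∈ X, ∀ B, B ⊆ A → B ∈ X

/-- `dim(X)`, as an integer: the maximum of `|A| - 1` over faces `A ∈ X`. -/
noncomputable def dimZ (X : Finset (Finset α)) : ℤ :=
  sSup {d : ℤ | ∃ A ∈ X, d = (A.card : ℤ) - 1}

/-- A circuit (minimal non-face) of `X`. -/
def IsCircuit (X : Finset (Finset α)) (S : Finset α) : Prop :=
  S ∉ X ∧ ∀ T ⊂ S, T ∈ X

/-- A circuit cover of `X`. -/
def IsCircuitCover (X : Finset (Finset α)) (C : Finset α) : Prop :=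
  ∀ S : Finset α, IsCircuit X S → (S.card : ℤ) - 1 ≤ ((S ∩ C).card : ℤ)

/-- The circuit cover number `ccn(X)` of a complex with vertex set `V`. -/
noncomputable def ccnZ (V : Finset α) (X : Finset (Finset α)) : ℤ :=
  sInf {k : ℤ | ∃ C ⊆ V, IsCircuitCover X C ∧
    k = dimZ (X.filter fun A => A ⊆ C) + 1}

/-- The simplicial join. -/
def joinF (X₁ X₂ : Finset (Finset α)) : Finset (Finset α) :=
  X₁.biUnion fun A => X₂.image fun B => A ∪ B

/-- A facet (maximal face) of `X`. -/
def IsFacet (X : Finset (Finset α)) (B : Finset α) : Prop :=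
  B ∈ X ∧ ∀ C ∈ X, B ⊆ C → C = B

/-- An elementary `k`-collapse: remove the interval `[A, B]` where `A` is a face of size
at most `k` contained in the unique facet `B`. -/
def ElemCollapse (k : ℕ) (X Y : Finset (Finset α)) : Prop :=
  ∃ A B : Finset α, A ∈ X ∧ A.card ≤ k ∧ IsFacet X B ∧ A ⊆ B ∧
    (∀ C, IsFacet X C → A ⊆ C → C = B) ∧
    Y = X.filter fun C => ¬ (A ⊆ C ∧ C ⊆ B)

/-- `X` is `k`-collapsible: it reduces to the void complex by elementary `k`-collapses. -/
def Collapsible (k : ℕ) (X : Finset (Finset α)) : Prop :=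
  Relation.ReflTransGen (ElemCollapse k) X ∅

/-- The collapsibility number `C(X)`. -/
noncomputable def collapseNum (X : Finset (Finset α)) : ℕ :=
  sInf {k : ℕ | Collapsible k X}

/-- `k(X)`: the maximum size of a set `{x₁, …, x_k}` of vertices of `X` admitting facets
`A₁, …, A_{k+1}` with `x_i ∉ A_i` and `x_i ∈ A_j` for `i < j`. -/
noncomputable def kNum (X : Finset (Finset α)) : ℕ :=
  sSup {k : ℕ | ∃ (x : Fin k → α) (A : Fin (k + 1) → Finset α),
    Function.Injective x ∧ (∀ i, {x i} ∈ X) ∧ (∀ j, IsFacet X (A j)) ∧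
    (∀ i : Fin k, x i ∉ A i.castSucc) ∧
    (∀ (i : Fin k) (j : Fin (k + 1)), (i : ℕ) < (j : ℕ) → x i ∈ A j)}

/-- Vertex decomposable simplicial complexes. -/
inductive VertexDecomposable : Finset (Finset α) → Prop
  | simplex (S : Finset α) : VertexDecomposable S.powerset
  | shed (X : Finset (Finset α)) (v : α) (hv : {v} ∈ X)
      (hdel : VertexDecomposable (delF X v)) (hlk : VertexDecomposable (lkF X v))
      (hfacet : ∀ B, IsFacet (delF X v) B → IsFacet X B) : VertexDecomposable X

section Graphs

variable {V : Type*} [Fintype V] [DecidableEq V]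

open Classical in
/-- The independence complex of a graph, as a `Finset` of faces. -/
noncomputable def indComplex (G : SimpleGraph V) : Finset (Finset V) :=
  Finset.univ.powerset.filter fun A => ∀ x ∈ A, ∀ y ∈ A, ¬ G.Adj x y

/-- The theta-number of a graph: the theta-number of its independence complex. -/
noncomputable def thetaG (G : SimpleGraph V) : ℕ := theta (indComplex G)

/-- A graph is chordal if it has no induced cycle of length greater than `3`. -/
def Chordal {W : Type*} (G : SimpleGraph W) : Prop :=
  ∀ n : ℕ, 3 < n → IsEmpty (SimpleGraph.cycleGraph n ↪g G)

/-- Contraction of the edge `xy`: the merged vertex is `x`, and `y` becomes isolated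
(isolated vertices are irrelevant for the independence complex/theta-number). -/
def contractEdge (G : SimpleGraph V) (x y : V) : SimpleGraph V where
  Adj a b := a ≠ b ∧ a ≠ y ∧ b ≠ y ∧
    ((a = x ∧ (G.Adj x b ∨ G.Adj y b)) ∨
     (b = x ∧ (G.Adj a x ∨ G.Adj a y)) ∨
     (a ≠ x ∧ b ≠ x ∧ G.Adj a b))
  symm := by
    constructor
    rintro a b ⟨hab, hay, hby, h⟩
    refine ⟨Ne.symm hab, hby, hay, ?_⟩
    rcases h with ⟨ha, h⟩ | ⟨hb, h⟩ | ⟨ha, hb, h⟩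
    · exact Or.inr (Or.inl ⟨ha, h.imp (fun t => t.symm) (fun t => t.symm)⟩)
    · exact Or.inl ⟨hb, h.imp (fun t => t.symm) (fun t => t.symm)⟩
    · exact Or.inr (Or.inr ⟨hb, ha, h.symm⟩)
  loopless := by constructor; rintro a ⟨h, -⟩; exact h rfl

/-- One edge-contraction step: `H` is obtained from `G` by contracting an edge of `G`. -/
def ContractionStep (G H : SimpleGraph V) : Prop :=
  ∃ x y, G.Adj x y ∧ H = contractEdge G x y

/-- A matching of `G` (a set of pairwise disjoint edges). -/
def IsMatching (G : SimpleGraph V) (M : Finset (Sym2 V)) : Prop :=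
  (∀ e ∈ M, e ∈ G.edgeSet) ∧
    ∀ e ∈ M, ∀ f ∈ M, e ≠ f → ∀ x, x ∈ e → x ∉ f

/-- An induced matching of `G`: a matching such that no two vertices belonging to
different edges of it are adjacent. -/
def IsInducedMatching (G : SimpleGraph V) (M : Finset (Sym2 V)) : Prop :=
  IsMatching G M ∧ ∀ e ∈ M, ∀ f ∈ M, e ≠ f → ∀ x ∈ e, ∀ y ∈ f, ¬ G.Adj x y

/-- The induced matching number `im(G)`. -/
noncomputable def inducedMatchingNum (G : SimpleGraph V) : ℕ :=
  sSup {k : ℕ | ∃ M, IsInducedMatching G M ∧ M.card = k}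

/-- A maximal matching. -/
def IsMaximalMatching (G : SimpleGraph V) (M : Finset (Sym2 V)) : Prop :=
  IsMatching G M ∧ ∀ N, IsMatching G N → M ⊆ N → N = M

/-- `min-m(G)`: the minimum size of a maximal matching. -/
noncomputable def minMaximalMatchingNum (G : SimpleGraph V) : ℕ :=
  sInf {k : ℕ | ∃ M, IsMaximalMatching G M ∧ M.card = k}

/-- Independent (stable) sets of a graph. -/
def IsIndepSet (G : SimpleGraph V) (A : Finset V) : Prop :=
  ∀ x ∈ A, ∀ y ∈ A, ¬ G.Adj x y

/-- A vertex cover. -/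
def IsVertexCover (G : SimpleGraph V) (C : Finset V) : Prop :=
  ∀ x y, G.Adj x y → x ∈ C ∨ y ∈ C

/-- `α(G[F])`: the maximum size of an independent set of `G` contained in `F`. -/
noncomputable def indepNumOn (G : SimpleGraph V) (F : Finset V) : ℕ :=
  sSup {k : ℕ | ∃ A ⊆ F, IsIndepSet G A ∧ A.card = k}

/-- The circuit cover number of a graph: `ccn(G) = min{α(G[F]) : F a vertex cover}`. -/
noncomputable def ccnG (G : SimpleGraph V) : ℕ :=
  sInf {k : ℕ | ∃ F, IsVertexCover G F ∧ k = indepNumOn G F}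

open Classical in
/-- The closed neighborhood of a vertex, as a `Finset`. -/
noncomputable def closedNbhd (G : SimpleGraph V) (x : V) : Finset V :=
  Finset.univ.filter fun z => z = x ∨ G.Adj x z

/-- The maximum privacy degree `Γ(G) = max{|N[x] \ N[y]| : xy ∈ E(G)}`. -/
noncomputable def privacyDeg (G : SimpleGraph V) : ℕ :=
  sSup {k : ℕ | ∃ x y, G.Adj x y ∧ k = (closedNbhd G x \ closedNbhd G y).card}

open Classical in
/-- The maximum degree `Δ(G)`. -/
noncomputable def maxDeg (G : SimpleGraph V) : ℕ :=
  sSup {k : ℕ | ∃ v, k = (Finset.univ.filter fun z => G.Adj v z).card}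

end Graphs

open Classical in
/-- `V(M)`: the set of vertices incident to the edges of `M`. -/
noncomputable def matchVerts {V : Type*} [Fintype V] (M : Finset (Sym2 V)) : Finset V :=
  Finset.univ.filter fun x => ∃ e ∈ M, x ∈ e

/-!
Induct along the recursion defining `θ`. A non-cone vertex `u` lies in a circuit with at least
two vertices (a minimal non-face inside `T ∪ {u}`, for a face `T` of `del(X;u)` outside
`lk(X;u)`); a circuit cover `C` meets such a circuit, and every vertex `v` of it is again
non-cone. Then `C` is a circuit cover of `del(X;v)` and `C \ {v}` one of `lk(X;v)`, while
`dim del(X;v)[C] ≤ dim X[C]` and, as `v ∈ C`, `dim lk(X;v)[C \ {v}] ≤ dim X[C] - 1`. So both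
branches of the recursion at `v` are bounded by `dim X[C] + 1`.
-/

section Complexes

variable {X : Finset (Finset α)} {v : α}

omit [DecidableEq α] in
lemma IsComplex.empty_mem (hX : IsComplex X) (hne : X.Nonempty) : ∅ ∈ X := by
  obtain ⟨A, hA⟩ := hne
  exact hX A hA ∅ (Finset.empty_subset A)

lemma IsComplex.singleton_mem (hX : IsComplex X) (hv : v ∈ vertF X) : {v} ∈ X := by
  obtain ⟨A, hA, hvA⟩ := Finset.mem_biUnion.mp hv
  exact hX A hA {v} (Finset.singleton_subset_iff.mpr hvA)

lemma IsComplex.delF (hX : IsComplex X) (v : α) : IsComplex (delF X v) := by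
  intro A hA B hBA
  rw [ThetaPaper.delF, Finset.mem_filter] at hA ⊢
  exact ⟨hX A hA.1 B hBA, fun hvB => hA.2 (hBA hvB)⟩

lemma IsComplex.lkF (hX : IsComplex X) (v : α) : IsComplex (lkF X v) := by
  intro A hA B hBA
  rw [ThetaPaper.lkF, Finset.mem_filter] at hA ⊢
  exact ⟨hX A hA.1 B hBA, fun hvB => hA.2.1 (hBA hvB),
    hX _ hA.2.2 _ (Finset.insert_subset_insert v hBA)⟩

lemma lkF_subset_delF (X : Finset (Finset α)) (v : α) : lkF X v ⊆ delF X v :=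
  Finset.monotone_filter_right X fun _ _ => And.left

lemma delF_subset (X : Finset (Finset α)) (v : α) : delF X v ⊆ X :=
  Finset.filter_subset _ X

lemma lkF_subset (X : Finset (Finset α)) (v : α) : lkF X v ⊆ X :=
  Finset.filter_subset _ X

lemma exists_mem_delF_insert_notMem (hv : v ∈ nonConeF X) :
    ∃ T ∈ X, v ∉ T ∧ insert v T ∉ X := by
  have hne : delF X v ≠ lkF X v := (Finset.mem_filter.mp hv).2
  obtain ⟨T, hTdel, hTlk⟩ := Finset.exists_of_ssubset
    ((lkF_subset_delF X v).ssubset_of_ne hne.symm)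
  rw [ThetaPaper.delF, Finset.mem_filter] at hTdel
  exact ⟨T, hTdel.1, hTdel.2, fun hvT => hTlk (Finset.mem_filter.mpr ⟨hTdel.1, hTdel.2, hvT⟩)⟩

end Complexes

section Dimension

omit [DecidableEq α]

variable {Y Z : Finset (Finset α)} {A : Finset α} {d : ℤ}

lemma bddAbove_dimZ_set (Y : Finset (Finset α)) :
    BddAbove {d : ℤ | ∃ A ∈ Y, d = (A.card : ℤ) - 1} := by
  refine ⟨((Y.sup Finset.card : ℕ) : ℤ), ?_⟩
  rintro d ⟨A, hA, rfl⟩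
  have := Finset.le_sup (f := Finset.card) hA
  omega

lemma le_dimZ (hA : A ∈ Y) : (A.card : ℤ) - 1 ≤ dimZ Y :=
  le_csSup (bddAbove_dimZ_set Y) ⟨A, hA, rfl⟩

lemma dimZ_le (hY : Y.Nonempty) (h : ∀ A ∈ Y, (A.card : ℤ) - 1 ≤ d) : dimZ Y ≤ d := by
  obtain ⟨A, hA⟩ := hY
  refine csSup_le ⟨_, A, hA, rfl⟩ ?_
  rintro _ ⟨B, hB, rfl⟩
  exact h B hB

/-- For empty `Y` this holds because `sSup ∅ = 0` in `ℤ`. -/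
lemma neg_one_le_dimZ (Y : Finset (Finset α)) : -1 ≤ dimZ Y := by
  rcases Y.eq_empty_or_nonempty with rfl | ⟨A, hA⟩
  · simp [dimZ]
  · have := le_dimZ hA
    omega

lemma dimZ_mono (hYZ : Y ⊆ Z) (hY : Y.Nonempty) : dimZ Y ≤ dimZ Z :=
  dimZ_le hY fun _ hA => le_dimZ (hYZ hA)

end Dimension

section Circuits

variable {X Y : Finset (Finset α)} {S : Finset α} {u v : α}

omit [DecidableEq α] in
lemma singleton_ssubset_of_one_lt_card (hvS : v ∈ S) (hS : 1 < S.card) : {v} ⊂ S :=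
  (Finset.singleton_subset_iff.mpr hvS).ssubset_of_ne fun h => by simp [← h] at hS

omit [DecidableEq α] in
lemma exists_isCircuit_subset (hS : S ∉ X) : ∃ R ⊆ S, IsCircuit X R := by
  obtain ⟨R, hRS, hR⟩ := exists_minimal_le_of_wellFoundedLT (· ∉ X) S hS
  exact ⟨R, hRS, hR.1, fun T hTR => by_contra fun hT => (hR.2 hT hTR.le).not_gt hTR⟩

omit [DecidableEq α] in
lemma IsCircuit.of_subset (hYX : Y ⊆ X) (hS : IsCircuit Y S) (hSX : S ∉ X) :
    IsCircuit X S :=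
  ⟨hSX, fun T hT => hYX (hS.2 T hT)⟩

omit [DecidableEq α] in
lemma IsCircuit.eq_singleton (hS : IsCircuit Y S) (hvS : v ∈ S) (hY : ∀ A ∈ Y, v ∉ A) :
    S = {v} := by
  by_contra hne
  have hvS' : {v} ⊂ S := (Finset.singleton_subset_iff.mpr hvS).ssubset_of_ne (Ne.symm hne)
  exact hY _ (hS.2 _ hvS') (Finset.mem_singleton_self v)

lemma IsCircuit.mem_nonConeF (hS : IsCircuit X S) (hvS : v ∈ S) (hS1 : 1 < S.card) :
    v ∈ nonConeF X := by
  have hvX : {v} ∈ X := hS.2 _ (singleton_ssubset_of_one_lt_card hvS hS1)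
  refine Finset.mem_filter.mpr ⟨Finset.mem_biUnion.mpr ⟨{v}, hvX, Finset.mem_singleton_self v⟩,
    fun hcone => ?_⟩
  have hdel : S.erase v ∈ delF X v :=
    Finset.mem_filter.mpr ⟨hS.2 _ (Finset.erase_ssubset hvS), Finset.notMem_erase v S⟩
  rw [hcone, ThetaPaper.lkF, Finset.mem_filter, Finset.insert_erase hvS] at hdel
  exact hS.1 hdel.2.2

lemma IsComplex.exists_isCircuit_one_lt_card (hX : IsComplex X) (hu : u ∈ nonConeF X) :
    ∃ R, IsCircuit X R ∧ 1 < R.card := by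
  obtain ⟨T, hTX, huT, hinsT⟩ := exists_mem_delF_insert_notMem hu
  obtain ⟨R, hRT, hR⟩ := exists_isCircuit_subset hinsT
  have huR : u ∈ R := by
    by_contra huR
    exact hR.1 (hX T hTX R fun x hx => (Finset.mem_insert.mp (hRT hx)).resolve_left
      fun hxu => huR (hxu ▸ hx))
  have huX : {u} ∈ X := hX.singleton_mem (Finset.mem_filter.mp hu).1
  refine ⟨R, hR, not_le.mp fun hR1 => hR.1 ?_⟩
  rwa [Finset.eq_singleton_iff_unique_mem.mpr ⟨huR, fun x hx => Finset.card_le_one.mp hR1 x hx u huR⟩]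

lemma IsCircuit.insert_of_lkF (hX : IsComplex X) (hS : IsCircuit (lkF X v) S) (hvS : v ∉ S)
    (hSX : S ∈ X) : IsCircuit X (insert v S) := by
  refine ⟨fun h => hS.1 (Finset.mem_filter.mpr ⟨hSX, hvS, h⟩), fun T hT => ?_⟩
  by_cases hvT : v ∈ T
  · have hTS : T.erase v ⊂ S := by
      refine ⟨fun x hx => ?_, fun hST => hT.2 ?_⟩
      · exact (Finset.mem_insert.mp (hT.1 (Finset.mem_of_mem_erase hx))).resolve_left
          (Finset.ne_of_mem_erase hx)
      · rw [← Finset.insert_erase hvT]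
        exact Finset.insert_subset_insert v hST
    have hTlk := (Finset.mem_filter.mp (hS.2 _ hTS)).2.2
    rwa [Finset.insert_erase hvT] at hTlk
  · exact hX S hSX T fun x hx =>
      (Finset.mem_insert.mp (hT.1 hx)).resolve_left fun hxv => hvT (hxv ▸ hx)

end Circuits

section CircuitCovers

variable {X : Finset (Finset α)} {C : Finset α} {u v : α}

lemma isCircuitCover_of_forall_subset {V : Finset α} (hXV : ∀ A ∈ X, A ⊆ V) :
    IsCircuitCover X V := by
  intro S hS
  rcases le_or_gt S.card 1 with hS1 | hS1
  · omega
  · have hSV : S ⊆ V := fun s hs => Finset.singleton_subset_iff.mp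
      (hXV _ (hS.2 _ (singleton_ssubset_of_one_lt_card hs hS1)))
    rw [Finset.inter_eq_left.mpr hSV]
    omega

lemma IsCircuitCover.delF (hC : IsCircuitCover X C) (v : α) : IsCircuitCover (delF X v) C := by
  intro S hS
  by_cases hvS : v ∈ S
  · rw [hS.eq_singleton hvS fun A hA => (Finset.mem_filter.mp hA).2]
    simp
  · exact hC S (hS.of_subset (delF_subset X v) fun hSX => hS.1 (Finset.mem_filter.mpr ⟨hSX, hvS⟩))

lemma IsCircuitCover.lkF (hX : IsComplex X) (hC : IsCircuitCover X C) (v : α) :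
    IsCircuitCover (lkF X v) (C.erase v) := by
  intro S hS
  by_cases hvS : v ∈ S
  · rw [hS.eq_singleton hvS fun A hA => (Finset.mem_filter.mp hA).2.1]
    simp
  rw [Finset.inter_erase, Finset.erase_eq_of_notMem fun h => hvS (Finset.mem_inter.mp h).1]
  by_cases hSX : S ∈ X
  · -- `S ∪ {v}` is a circuit of `X`, and it meets `C` in at most one more vertex than `S` does.
    have hcov := hC _ (hS.insert_of_lkF hX hvS hSX)
    have hle : (insert v S ∩ C).card ≤ (S ∩ C).card + 1 := by
      rw [Finset.inter_insert]
      split_ifs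
      exacts [Finset.card_insert_le v _, Nat.le_succ _]
    rw [Finset.card_insert_of_notMem hvS] at hcov
    push_cast at hcov
    omega
  · exact hC S (hS.of_subset (lkF_subset X v) hSX)

lemma IsComplex.exists_mem_nonConeF_mem (hX : IsComplex X) (hC : IsCircuitCover X C)
    (hu : u ∈ nonConeF X) : ∃ v ∈ nonConeF X, v ∈ C := by
  obtain ⟨R, hR, hR1⟩ := hX.exists_isCircuit_one_lt_card hu
  obtain ⟨v, hv⟩ : (R ∩ C).Nonempty := by
    rw [← Finset.card_pos]
    have := hC R hR
    omega
  obtain ⟨hvR, hvC⟩ := Finset.mem_inter.mp hv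
  exact ⟨v, hR.mem_nonConeF hvR hR1, hvC⟩

end CircuitCovers

section Recursion

variable {X : Finset (Finset α)} {C : Finset α} {v : α}

lemma theta_eq_zero (h : nonConeF X = ∅) : theta X = 0 := by
  rw [theta, dif_neg (Finset.not_nonempty_iff_eq_empty.mpr h)]

lemma theta_le_max_of_mem_nonConeF (hv : v ∈ nonConeF X) :
    theta X ≤ max (theta (delF X v)) (theta (lkF X v) + 1) := by
  rw [theta, dif_pos ⟨v, hv⟩]
  exact Finset.inf'_le _ (Finset.mem_attach _ ⟨v, hv⟩)

lemma dimZ_filter_delF_le (v : α) (h0 : ∅ ∈ X) :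
    dimZ ((delF X v).filter fun A => A ⊆ C) ≤ dimZ (X.filter fun A => A ⊆ C) :=
  dimZ_mono (Finset.monotone_filter_left _ (delF_subset X v))
    ⟨∅, Finset.mem_filter.mpr ⟨Finset.mem_filter.mpr ⟨h0, Finset.notMem_empty v⟩,
      Finset.empty_subset C⟩⟩

lemma dimZ_filter_lkF_add_one_le (hvC : v ∈ C) (h0 : ∅ ∈ X) (hvX : {v} ∈ X) :
    dimZ ((lkF X v).filter fun A => A ⊆ C.erase v) + 1 ≤ dimZ (X.filter fun A => A ⊆ C) := by
  suffices dimZ ((lkF X v).filter fun A => A ⊆ C.erase v) ≤ dimZ (X.filter fun A => A ⊆ C) - 1 by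
    omega
  refine dimZ_le ⟨∅, Finset.mem_filter.mpr ⟨Finset.mem_filter.mpr
    ⟨h0, Finset.notMem_empty v, hvX⟩, Finset.empty_subset _⟩⟩ fun A hA => ?_
  obtain ⟨hAlk, hAC⟩ := Finset.mem_filter.mp hA
  obtain ⟨-, hvA, hvAX⟩ := Finset.mem_filter.mp hAlk
  have hdim := le_dimZ (Y := X.filter fun A => A ⊆ C) (Finset.mem_filter.mpr
    ⟨hvAX, Finset.insert_subset hvC (hAC.trans (Finset.erase_subset v C))⟩)
  rw [Finset.card_insert_of_notMem hvA] at hdim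
  push_cast at hdim
  omega

end Recursion

theorem theta_le_dimZ_add_one {X : Finset (Finset α)} {C : Finset α} (hX : IsComplex X)
    (hC : IsCircuitCover X C) :
    (theta X : ℤ) ≤ dimZ (X.filter fun A => A ⊆ C) + 1 := by
  rcases (nonConeF X).eq_empty_or_nonempty with h | ⟨u, hu⟩
  · rw [theta_eq_zero h]
    have := neg_one_le_dimZ (X.filter fun A => A ⊆ C)
    omega
  obtain ⟨v, hv, hvC⟩ := hX.exists_mem_nonConeF_mem hC hu
  have hvX : {v} ∈ X := hX.singleton_mem (Finset.mem_filter.mp hv).1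
  have h0 : ∅ ∈ X := hX.empty_mem ⟨_, hvX⟩
  have hdel : (theta (delF X v) : ℤ) ≤ dimZ (X.filter fun A => A ⊆ C) + 1 := by
    have := theta_le_dimZ_add_one (hX.delF v) (hC.delF v)
    have := dimZ_filter_delF_le (C := C) v h0
    omega
  have hlk : (theta (lkF X v) : ℤ) + 1 ≤ dimZ (X.filter fun A => A ⊆ C) + 1 := by
    have := theta_le_dimZ_add_one (hX.lkF v) (hC.lkF hX v)
    have := dimZ_filter_lkF_add_one_le hvC h0 hvX
    omega
  calc (theta X : ℤ) ≤ max (theta (delF X v) : ℤ) (theta (lkF X v) + 1) := by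
        exact_mod_cast theta_le_max_of_mem_nonConeF hv
    _ ≤ _ := max_le hdel hlk
termination_by X.card
decreasing_by
  · exact delF_card_lt hv
  · exact lkF_card_lt hv

variable {X : Finset (Finset α)}

theorem theta_le_ccn_general {V : Finset α} (hX : IsComplex X) (hXV : ∀ A ∈ X, A ⊆ V) :
    (theta X : ℤ) ≤ ccnZ V X :=
  le_csInf ⟨_, V, subset_rfl, isCircuitCover_of_forall_subset hXV, rfl⟩
    fun _ ⟨_, _, hC, hk⟩ => hk ▸ theta_le_dimZ_add_one hX hC

theorem theta_le_ccn {V : Finset α} (hX : IsComplex X) (hXV : ∀ A ∈ X, A ⊆ V)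
    (hne : X.Nonempty) :
    (theta X : ℤ) ≤ ccnZ V X :=
  theta_le_ccn_general hX hXV

end ThetaPaper
end

section
/- Let G be a finite simple graph with at least one edge. Then G is co-chordal (i.e., the complement of G is chordal) if and only if θ(G) = 1, where θ(G) := θ(Ind(G)) is the theta-number of the independence complex of G. -/
namespace ThetaPaper

variable {α : Type*} [DecidableEq α]

/-!
In `Ind(G[W])` the deletion of `v` is `Ind(G[W - v])`, the link of `v` is `Ind(G[W \ N[v]])`,
the non-cone vertices are the non-isolated vertices of `G[W]`, and `θ = 0` exactly when `W` is
independent. So `θ ≤ 1` follows once every non-independent `W` has a vertex with a `G`-neighbour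
that is simplicial in `Gᶜ[W]`; for chordal `Gᶜ` this is Dirac's lemma, that a non-complete chordal
graph has two non-adjacent simplicial vertices. Conversely, if `Gᶜ` has an induced cycle of length
at least four, every shedding sequence must eventually shed a vertex of the cycle, and its link
contains the `G`-edge between its two cycle-neighbours, so `θ ≥ 2`.
-/

section Theta

variable {X : Finset (Finset α)} {v : α} {k : ℕ}

lemma theta_eq_zero_of_not_nonempty (h : ¬ (nonConeF X).Nonempty) : theta X = 0 := by
  rw [theta, dif_neg h]

lemma le_theta_of_forall (hne : (nonConeF X).Nonempty)
    (h : ∀ v ∈ nonConeF X, k ≤ max (theta (delF X v)) (theta (lkF X v) + 1)) :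
    k ≤ theta X := by
  rw [theta, dif_pos hne]
  exact Finset.le_inf' _ _ fun v _ => h v.1 v.2

lemma one_le_theta (h : (nonConeF X).Nonempty) : 1 ≤ theta X :=
  le_theta_of_forall h fun _ _ => le_max_of_le_right (Nat.le_add_left 1 _)

lemma theta_le_of_mem_nonConeF (hv : v ∈ nonConeF X) (hdel : theta (delF X v) ≤ k)
    (hlk : theta (lkF X v) + 1 ≤ k) : theta X ≤ k := by
  rw [theta, dif_pos ⟨v, hv⟩]
  exact (Finset.inf'_le _ (Finset.mem_attach _ ⟨v, hv⟩)).trans (max_le hdel hlk)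

end Theta

section IndependenceComplex

variable {V : Type*}

open Classical in
noncomputable def indComplexOn (G : SimpleGraph V) (W : Finset V) : Finset (Finset V) :=
  W.powerset.filter (IsIndepSet G)

variable {G : SimpleGraph V} {W : Finset V} {v : V}

lemma mem_indComplexOn {A : Finset V} : A ∈ indComplexOn G W ↔ A ⊆ W ∧ IsIndepSet G A := by
  simp [indComplexOn]

lemma isIndepSet_singleton (u : V) : IsIndepSet G {u} := by
  simp [IsIndepSet]

variable [DecidableEq V]

lemma indComplex_eq_indComplexOn_univ [Fintype V] : indComplex G = indComplexOn G Finset.univ := by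
  ext A
  simp [indComplex, indComplexOn, IsIndepSet]

lemma isIndepSet_insert {A : Finset V} :
    IsIndepSet G (insert v A) ↔ IsIndepSet G A ∧ ∀ u ∈ A, ¬ G.Adj v u := by
  simp only [IsIndepSet, Finset.mem_insert]
  constructor
  · intro h
    exact ⟨fun x hx y hy => h x (.inr hx) y (.inr hy), fun u hu => h v (.inl rfl) u (.inr hu)⟩
  · rintro ⟨hA, hv⟩ x (rfl | hx) y (rfl | hy)
    · exact G.loopless.irrefl _
    · exact hv y hy
    · exact fun h => hv x hx h.symm
    · exact hA x hx y hy

lemma delF_indComplexOn : delF (indComplexOn G W) v = indComplexOn G (W.erase v) := by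
  ext A
  simp only [delF, Finset.mem_filter, mem_indComplexOn, Finset.subset_erase]
  tauto

open Classical in
lemma lkF_indComplexOn (hv : v ∈ W) :
    lkF (indComplexOn G W) v = indComplexOn G ((W.erase v).filter fun u => ¬ G.Adj v u) := by
  ext A
  simp only [lkF, Finset.mem_filter, mem_indComplexOn, isIndepSet_insert, Finset.subset_iff,
    Finset.mem_erase]
  grind

lemma vertF_indComplexOn : vertF (indComplexOn G W) = W := by
  ext x
  simp only [vertF, Finset.mem_biUnion, id]
  constructor
  · rintro ⟨A, hA, hx⟩
    exact (mem_indComplexOn.mp hA).1 hx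
  · exact fun hx => ⟨{x}, mem_indComplexOn.mpr ⟨by simpa, isIndepSet_singleton x⟩, by simp⟩

lemma mem_nonConeF_indComplexOn :
    v ∈ nonConeF (indComplexOn G W) ↔ v ∈ W ∧ ∃ u ∈ W, G.Adj v u := by
  classical
  simp only [nonConeF, Finset.mem_filter, vertF_indComplexOn]
  refine and_congr_right fun hv => ?_
  rw [delF_indComplexOn, lkF_indComplexOn hv]
  constructor
  · intro hne
    by_contra! hno
    exact hne (by rw [Finset.filter_true_of_mem fun u hu => hno u (Finset.mem_of_mem_erase hu)])
  · rintro ⟨u, hu, hadj⟩ heq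
    have hmem : {u} ∈ indComplexOn G (W.erase v) := mem_indComplexOn.mpr
      ⟨by simpa using Finset.mem_erase.mpr ⟨hadj.ne.symm, hu⟩, isIndepSet_singleton u⟩
    rw [heq, mem_indComplexOn, Finset.singleton_subset_iff, Finset.mem_filter] at hmem
    exact hmem.1.2 hadj

lemma theta_indComplexOn_eq_zero (h : IsIndepSet G W) : theta (indComplexOn G W) = 0 := by
  refine theta_eq_zero_of_not_nonempty fun ⟨v, hv⟩ => ?_
  obtain ⟨hvW, u, huW, hadj⟩ := mem_nonConeF_indComplexOn.mp hv
  exact h v hvW u huW hadj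

end IndependenceComplex

section CycleGraph

open SimpleGraph

variable {n : ℕ}

lemma cycleGraph_adj_of_lt (hn : 2 ≤ n) {u v : Fin n} (huv : (u : ℕ) < v) :
    (cycleGraph n).Adj u v ↔ (v : ℕ) = u + 1 ∨ (u : ℕ) = 0 ∧ (v : ℕ) = n - 1 := by
  have hu := u.isLt
  have hv := v.isLt
  rw [cycleGraph_adj', Fin.sub_def, Fin.sub_def]
  dsimp only
  have h1 : ((n - (v : ℕ)) + u) % n = (n - v) + u := Nat.mod_eq_of_lt (by omega)
  have h2 : ((n - (u : ℕ)) + v) % n = (v : ℕ) - u := by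
    rw [show (n - (u : ℕ)) + v = ((v : ℕ) - u) + n by omega, Nat.add_mod_right,
      Nat.mod_eq_of_lt (by omega)]
  rw [h1, h2]
  omega

lemma cycleGraph_exists_nonadj_neighbors (hn : 3 < n) (i : Fin n) :
    ∃ j k, (cycleGraph n).Adj i j ∧ (cycleGraph n).Adj i k ∧ j ≠ k ∧ ¬ (cycleGraph n).Adj j k := by
  have : NeZero n := ⟨by omega⟩
  have h1 : (1 : Fin n).val = 1 := by rw [Fin.val_one', Nat.mod_eq_of_lt (by omega)]
  have h2 : ((1 : Fin n) + 1).val = 2 := by rw [Fin.val_add, h1, Nat.mod_eq_of_lt (by omega)]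
  have h2' : (-((1 : Fin n) + 1)).val = n - 2 := by
    rw [Fin.val_neg', h2, Nat.mod_eq_of_lt (by omega)]
  refine ⟨i - 1, i + 1, ?_, ?_, ?_, ?_⟩
  · rw [cycleGraph_adj', sub_sub_cancel, h1]; simp
  · rw [cycleGraph_adj', add_sub_cancel_left, h1]; simp
  · intro h
    have : (i + 1) - (i - 1) = 1 + 1 := by abel
    rw [← h, sub_self] at this
    have := congrArg Fin.val this
    rw [h2] at this
    simp at this
  · rw [cycleGraph_adj', show (i - 1) - (i + 1) = -(1 + 1) by abel,
      show (i + 1) - (i - 1) = 1 + 1 by abel, h2, h2']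
    omega

end CycleGraph

section LowerBound

open SimpleGraph

variable {V : Type*} {G : SimpleGraph V}

lemma adj_of_embedding_compl {W : Type*} {H : SimpleGraph W} (e : H ↪g Gᶜ) {u v : W}
    (hne : u ≠ v) (hnadj : ¬ H.Adj u v) : G.Adj (e u) (e v) := by
  by_contra h
  exact hnadj (e.map_rel_iff.mp ((compl_adj G _ _).mpr ⟨e.injective.ne hne, h⟩))

lemma not_adj_of_embedding_compl {W : Type*} {H : SimpleGraph W} (e : H ↪g Gᶜ) {u v : W}
    (h : H.Adj u v) : ¬ G.Adj (e u) (e v) :=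
  ((compl_adj G _ _).mp (e.map_rel_iff.mpr h)).2

variable [DecidableEq V]

lemma two_le_theta_of_cycle_compl {n : ℕ} (hn : 3 < n) (e : cycleGraph n ↪g Gᶜ) (W : Finset V)
    (he : ∀ i, e i ∈ W) : 2 ≤ theta (indComplexOn G W) := by
  classical
  induction W using Finset.strongInduction with
  | _ W ih =>
  have hedge : ∀ i, ∃ j k, (cycleGraph n).Adj i j ∧ (cycleGraph n).Adj i k ∧
      G.Adj (e j) (e k) := fun i => by
    obtain ⟨j, k, hj, hk, hjk, hnjk⟩ := cycleGraph_exists_nonadj_neighbors hn i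
    exact ⟨j, k, hj, hk, adj_of_embedding_compl e hjk hnjk⟩
  obtain ⟨j, k, -, -, hjk⟩ := hedge ⟨0, by omega⟩
  have hne : (nonConeF (indComplexOn G W)).Nonempty :=
    ⟨e j, mem_nonConeF_indComplexOn.mpr ⟨he j, e k, he k, hjk⟩⟩
  refine le_theta_of_forall hne fun v hv => ?_
  have hvW := (mem_nonConeF_indComplexOn.mp hv).1
  by_cases hvC : ∃ i, e i = v
  · obtain ⟨i, rfl⟩ := hvC
    obtain ⟨j, k, hij, hik, hjk⟩ := hedge i
    have hlk : e j ∈ nonConeF (lkF (indComplexOn G W) (e i)) := by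
      have hmem : ∀ l, (cycleGraph n).Adj i l →
          e l ∈ (W.erase (e i)).filter fun u => ¬ G.Adj (e i) u := fun l hl =>
        Finset.mem_filter.mpr ⟨Finset.mem_erase.mpr ⟨e.injective.ne hl.ne.symm, he l⟩,
          not_adj_of_embedding_compl e hl⟩
      rw [lkF_indComplexOn hvW]
      exact mem_nonConeF_indComplexOn.mpr ⟨hmem j hij, e k, hmem k hik, hjk⟩
    have := one_le_theta ⟨_, hlk⟩
    omega
  · push Not at hvC
    refine le_max_of_le_left ?_
    rw [delF_indComplexOn]
    exact ih _ (Finset.erase_ssubset hvW) fun i => Finset.mem_erase.mpr ⟨hvC i, he i⟩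

end LowerBound

section InducedPaths

variable {V : Type*} {H : SimpleGraph V} {F : Finset V} {s t : V} {P : List V}

structure IsWalkVia (H : SimpleGraph V) (F : Finset V) (s t : V) (P : List V) : Prop where
  two_le_length : 2 ≤ P.length
  head?_eq : P.head? = some s
  getLast?_eq : P.getLast? = some t
  isChain : P.IsChain H.Adj
  mem_of_ne : ∀ x ∈ P, x ≠ s → x ≠ t → x ∈ F

structure IsInducedPath (H : SimpleGraph V) (P : List V) : Prop where
  nodup : P.Nodup
  adj_iff : ∀ (u v : ℕ) (hu : u < P.length) (hv : v < P.length), u < v →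
    (H.Adj P[u] P[v] ↔ v = u + 1)

namespace IsWalkVia

lemma getElem_zero (hP : IsWalkVia H F s t P) (h : 0 < P.length) : P[0] = s := by
  simpa [List.head?_eq_getElem?, h] using hP.head?_eq

lemma getElem_length_sub_one (hP : IsWalkVia H F s t P) (h : P.length - 1 < P.length) :
    P[P.length - 1] = t := by
  simpa [List.getLast?_eq_getElem?, h] using hP.getLast?_eq

lemma getElem_mem (hP : IsWalkVia H F s t P) (hnd : P.Nodup) {i : ℕ} (hi : i < P.length)
    (h0 : i ≠ 0) (hl : i ≠ P.length - 1) : P[i] ∈ F := by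
  refine hP.mem_of_ne _ (List.getElem_mem _) (fun h => h0 ?_) (fun h => hl ?_)
  · exact (hnd.getElem_inj_iff (j := 0)).mp (h.trans (hP.getElem_zero (by omega)).symm)
  · exact (hnd.getElem_inj_iff (j := P.length - 1)).mp
      (h.trans (hP.getElem_length_sub_one (by omega)).symm)

lemma shortcut (hP : IsWalkVia H F s t P) {u v : ℕ} (hu : u < P.length) (hv : v < P.length)
    (hadj : H.Adj P[u] P[v]) : IsWalkVia H F s t (P.take (u + 1) ++ P.drop v) where
  two_le_length := by simp; omega
  head?_eq := by
    rw [← hP.head?_eq]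
    cases P <;> simp_all
  getLast?_eq := by
    simp [List.getLast?_append, List.getLast?_drop, show ¬ P.length ≤ v by omega, hP.getLast?_eq]
  isChain := (hP.isChain.take _).append (hP.isChain.drop _) fun x hx y hy => by
    rw [List.getLast?_take] at hx
    simp_all
  mem_of_ne x hx := hP.mem_of_ne x <| by
    rcases List.mem_append.mp hx with h | h
    exacts [List.mem_of_mem_take h, List.mem_of_mem_drop h]

lemma take (hP : IsWalkVia H F s t P) {u : ℕ} (hu : u < P.length) (hu0 : 1 ≤ u)
    (ht : P[u] = t) : IsWalkVia H F s t (P.take (u + 1)) where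
  two_le_length := by simp; omega
  head?_eq := by
    rw [← hP.head?_eq]
    cases P <;> simp_all
  getLast?_eq := by rw [List.getLast?_take]; simp_all
  isChain := hP.isChain.take _
  mem_of_ne x hx := hP.mem_of_ne x (List.mem_of_mem_take hx)

lemma cons (hP : IsWalkVia H F s t P) (hs : s ∈ F) {r : V} (hr : H.Adj r s) :
    IsWalkVia H F r t (r :: P) := by
  obtain ⟨P, rfl⟩ := List.head?_eq_some_iff.mp hP.head?_eq
  refine ⟨by simp, rfl, ?_, List.isChain_cons_cons.mpr ⟨hr, hP.isChain⟩, ?_⟩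
  · rw [List.getLast?_cons_cons, hP.getLast?_eq]
  · intro x hx hxr hxt
    obtain rfl | hx := List.mem_cons.mp hx
    · exact absurd rfl hxr
    · by_cases hxs : x = s
      exacts [hxs ▸ hs, hP.mem_of_ne x hx hxs hxt]

/-- A shortest walk from `s` to `t` via `F` is an induced path: a chord or a repeated vertex
would give a shorter one. -/
lemma exists_isInducedPath (hP : IsWalkVia H F s t P) (hst : ¬ H.Adj s t) (hne : s ≠ t) :
    ∃ Q, IsWalkVia H F s t Q ∧ 3 ≤ Q.length ∧ IsInducedPath H Q := by
  obtain ⟨Q, hQ, hmin⟩ := (measure List.length).wf.has_min {Q | IsWalkVia H F s t Q} ⟨P, hP⟩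
  replace hmin : ∀ Q', IsWalkVia H F s t Q' → Q.length ≤ Q'.length :=
    fun Q' h => not_lt.mp (hmin Q' h)
  have hlen := hQ.two_le_length
  have hQ0 := hQ.getElem_zero (by omega)
  have hQl := hQ.getElem_length_sub_one (by omega)
  have hchain := List.isChain_iff_getElem.mp hQ.isChain
  have no_chord : ∀ (u v : ℕ) (hu : u < Q.length) (hv : v < Q.length), u + 1 < v →
      ¬ H.Adj Q[u] Q[v] := fun u v hu hv huv hadj => by
    have := hmin _ (hQ.shortcut hu hv hadj)
    simp at this
    omega
  refine ⟨Q, hQ, ?_, ⟨List.pairwise_iff_getElem.mpr fun u v hu hv huv heq => ?_, ?_⟩⟩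
  · by_contra! h
    apply hst
    have := hchain 0 (by omega)
    simp_all [show Q.length - 1 = 1 by omega]
  · by_cases hvl : v = Q.length - 1
    · subst hvl
      rw [hQl] at heq
      rcases Nat.eq_zero_or_pos u with rfl | hu0
      · exact hne (hQ0 ▸ heq)
      · have := hmin _ (hQ.take hu hu0 heq)
        simp at this
        omega
    · exact no_chord u (v + 1) hu (by omega) (by omega) (heq ▸ hchain v (by omega))
  · intro u v hu hv huv
    refine ⟨fun hadj => ?_, fun h => ?_⟩
    · by_contra h
      exact no_chord u v hu hv (by omega) hadj
    · subst h
      exact hchain u hv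

end IsWalkVia

end InducedPaths

section ChordalObstruction

open SimpleGraph

variable {V : Type*} {H : SimpleGraph V}

lemma not_chordal_of_cycle {n : ℕ} (hn : 3 < n) (f : Fin n → V) (hf : Function.Injective f)
    (hadj : ∀ u v : Fin n, (u : ℕ) < v →
      (H.Adj (f u) (f v) ↔ (v : ℕ) = u + 1 ∨ (u : ℕ) = 0 ∧ (v : ℕ) = n - 1)) :
    ¬ Chordal H := fun hch => by
  refine (hch n hn).false ⟨⟨f, hf⟩, @fun u v => ?_⟩
  rw [Function.Embedding.coeFn_mk]
  rcases lt_trichotomy (u : ℕ) v with h | h | h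
  · rw [hadj u v h, cycleGraph_adj_of_lt (by omega) h]
  · simp [Fin.ext h]
  · rw [H.adj_comm, (cycleGraph n).adj_comm, hadj v u h, cycleGraph_adj_of_lt (by omega) h]

lemma not_chordal_of_induced_paths {A B : Finset V} {s t : V}
    (hAB : ∀ x ∈ A, ∀ y ∈ B, x ≠ y ∧ ¬ H.Adj x y) (hsB : s ∉ B) (htB : t ∉ B)
    {P Q : List V} (hP : IsWalkVia H A s t P) (hQ : IsWalkVia H B s t Q)
    (hP3 : 3 ≤ P.length) (hQ3 : 3 ≤ Q.length) (hPi : IsInducedPath H P)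
    (hQi : IsInducedPath H Q) : ¬ Chordal H := by
  set p := P.length
  set q := Q.length
  have hP0 : P[0] = s := hP.getElem_zero _
  have hPl : P[p - 1] = t := hP.getElem_length_sub_one _
  have hQ0 : Q[0] = s := hQ.getElem_zero _
  have hQl : Q[q - 1] = t := hQ.getElem_length_sub_one _
  have hQB : ∀ (j : ℕ) (hj : j < q), j ≠ 0 → j ≠ q - 1 → Q[j] ∈ B :=
    fun j hj => hQ.getElem_mem hQi.nodup hj
  -- the cycle runs along `P` from `s` to `t`, then back along the interior of `Q`
  let f : Fin (p + q - 2) → V := fun i =>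
    if h : (i : ℕ) < p then P[(i : ℕ)] else Q[p + q - 2 - i]'(by omega)
  have hf_lt (i : Fin (p + q - 2)) (h : (i : ℕ) < p) : f i = P[(i : ℕ)] := dif_pos h
  have hf_ge (i : Fin (p + q - 2)) (h : ¬ (i : ℕ) < p) : f i = Q[p + q - 2 - i]'(by omega) :=
    dif_neg h
  have hf_ge_mem (i : Fin (p + q - 2)) (h : ¬ (i : ℕ) < p) : f i ∈ B := by
    rw [hf_ge i h]; exact hQB _ _ (by omega) (by omega)
  have hPA (i : Fin (p + q - 2)) (h : (i : ℕ) < p) (h0 : (i : ℕ) ≠ 0) (hl : (i : ℕ) ≠ p - 1) :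
      f i ∈ A := by
    rw [hf_lt i h]; exact hP.getElem_mem hPi.nodup _ h0 hl
  have hf_lt_not_mem (i : Fin (p + q - 2)) (h : (i : ℕ) < p) : f i ∉ B := by
    by_cases h0 : (i : ℕ) = 0
    · simpa [hf_lt i h, h0, hP0] using hsB
    by_cases hl : (i : ℕ) = p - 1
    · simpa [hf_lt i h, hl, hPl] using htB
    exact fun hB => (hAB _ (hPA i h h0 hl) _ hB).1 rfl
  refine not_chordal_of_cycle (by omega) f (fun u v huv => Fin.ext ?_) fun u v huv => ?_
  · by_cases hu : (u : ℕ) < p <;> by_cases hv : (v : ℕ) < p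
    · rwa [hf_lt u hu, hf_lt v hv, hPi.nodup.getElem_inj_iff] at huv
    · exact absurd (huv ▸ hf_ge_mem v hv) (hf_lt_not_mem u hu)
    · exact absurd (huv ▸ hf_ge_mem u hu) (hf_lt_not_mem v hv)
    · rw [hf_ge u hu, hf_ge v hv, hQi.nodup.getElem_inj_iff] at huv
      omega
  by_cases hv : (v : ℕ) < p
  · rw [hf_lt u (by omega), hf_lt v hv, hPi.adj_iff _ _ _ _ huv]
    omega
  by_cases hu : (u : ℕ) < p
  · rw [hf_ge v hv]
    by_cases h0 : (u : ℕ) = 0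
    · rw [hf_lt u hu, getElem_congr_idx h0, hP0, ← hQ0, hQi.adj_iff _ _ _ _ (by omega)]
      omega
    by_cases hl : (u : ℕ) = p - 1
    · rw [hf_lt u hu, getElem_congr_idx hl, hPl, ← hQl, H.adj_comm,
        hQi.adj_iff _ _ _ _ (by omega)]
      omega
    exact iff_of_false (hAB _ (hPA u hu h0 hl) _ (hQB _ _ (by omega) (by omega))).2 (by omega)
  · rw [hf_ge u hu, hf_ge v hv, H.adj_comm, hQi.adj_iff _ _ _ _ (by omega)]
    omega

end ChordalObstruction

section Components

variable {V : Type*} {H : SimpleGraph V} {F : Finset V} {a b x y : V}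

/-- Reachability in `H[F]`; note that `ReachIn H F x x` holds also for `x ∉ F`. -/
def ReachIn (H : SimpleGraph V) (F : Finset V) : V → V → Prop :=
  Relation.ReflTransGen fun a b => a ∈ F ∧ b ∈ F ∧ H.Adj a b

lemma ReachIn.symm (h : ReachIn H F x y) : ReachIn H F y x := by
  induction h with
  | refl => exact .refl
  | tail _ hstep ih => exact .head ⟨hstep.2.1, hstep.1, hstep.2.2.symm⟩ ih

lemma ReachIn.exists_isWalkVia {s t : V} (h : ReachIn H F x y) (hx : x ∈ F) (hsx : H.Adj s x)
    (hyt : H.Adj y t) : ∃ P, IsWalkVia H F s t P := by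
  induction h using Relation.ReflTransGen.head_induction_on generalizing s with
  | refl =>
    refine ⟨[s, y, t], by simp, rfl, rfl, by simp [hsx, hyt], ?_⟩
    simp only [List.mem_cons, List.not_mem_nil, or_false]
    rintro z (rfl | rfl | rfl) hzs hzt
    exacts [absurd rfl hzs, hx, absurd rfl hzt]
  | head hstep _ ih =>
    obtain ⟨P, hP⟩ := ih hstep.2.1 hstep.2.2
    exact ⟨_, hP.cons hx hsx⟩

open Classical in
noncomputable def componentIn (H : SimpleGraph V) (F : Finset V) (a : V) : Finset V :=
  F.filter (ReachIn H F a)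

lemma mem_componentIn : x ∈ componentIn H F a ↔ x ∈ F ∧ ReachIn H F a x := by
  simp [componentIn]

lemma self_mem_componentIn (ha : a ∈ F) : a ∈ componentIn H F a :=
  mem_componentIn.mpr ⟨ha, .refl⟩

lemma componentIn_subset : componentIn H F a ⊆ F := fun _ hx => (mem_componentIn.mp hx).1

lemma mem_componentIn_of_adj (hx : x ∈ componentIn H F a) (hy : y ∈ F) (hxy : H.Adj x y) :
    y ∈ componentIn H F a := by
  obtain ⟨hxF, hax⟩ := mem_componentIn.mp hx
  exact mem_componentIn.mpr ⟨hy, hax.tail ⟨hxF, hy, hxy⟩⟩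

lemma reachIn_componentIn (hx : x ∈ componentIn H F a) (hy : y ∈ componentIn H F a) :
    ReachIn H (componentIn H F a) x y := by
  have hax := (mem_componentIn.mp hx).2
  have hxy : ReachIn H F x y := hax.symm.trans (mem_componentIn.mp hy).2
  clear hy
  induction hxy with
  | refl => exact .refl
  | @tail p r hxp hstep ih =>
    have hp : p ∈ componentIn H F a := mem_componentIn.mpr ⟨hstep.1, hax.trans hxp⟩
    exact ih.tail ⟨hp, mem_componentIn_of_adj hp hstep.2.1 hstep.2.2, hstep.2.2⟩

lemma ne_and_not_adj_of_mem_componentIn (hab : ¬ ReachIn H F a b)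
    (hx : x ∈ componentIn H F a) (hy : y ∈ componentIn H F b) : x ≠ y ∧ ¬ H.Adj x y := by
  obtain ⟨hxF, hax⟩ := mem_componentIn.mp hx
  obtain ⟨hyF, hby⟩ := mem_componentIn.mp hy
  refine ⟨?_, fun hxy => hab ((hax.tail ⟨hxF, hyF, hxy⟩).trans hby.symm)⟩
  rintro rfl
  exact hab (hax.trans hby.symm)

end Components

section Dirac

open SimpleGraph Finset

variable {V : Type*} {H : SimpleGraph V} {W S : Finset V} {a b : V}

def IsSimplicialIn (H : SimpleGraph V) (W : Finset V) (v : V) : Prop :=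
  H.IsClique {x | x ∈ W ∧ H.Adj v x}

lemma IsSimplicialIn.of_subset {U : Finset V} {v : V} (hv : IsSimplicialIn H U v)
    (h : ∀ x ∈ W, H.Adj v x → x ∈ U) : IsSimplicialIn H W v :=
  fun x hx y hy hxy => hv ⟨h x hx.1 hx.2, hx.2⟩ ⟨h y hy.1 hy.2, hy.2⟩ hxy

lemma exists_isSimplicialIn_notMem {U : Finset V}
    (hU : ∀ a ∈ U, ∀ b ∈ U, a ≠ b → ¬ H.Adj a b → ∃ v₁ ∈ U, ∃ v₂ ∈ U,
      v₁ ≠ v₂ ∧ ¬ H.Adj v₁ v₂ ∧ IsSimplicialIn H U v₁ ∧ IsSimplicialIn H U v₂)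
    (hS : H.IsClique (S : Set V)) {c : V} (hc : c ∈ U) (hcS : c ∉ S) :
    ∃ v ∈ U, v ∉ S ∧ IsSimplicialIn H U v := by
  by_cases hU' : H.IsClique (U : Set V)
  · exact ⟨c, hc, hcS, fun x hx y hy => hU' hx.1 hy.1⟩
  obtain ⟨a, ha, b, hb, hab, hnadj⟩ : ∃ a ∈ U, ∃ b ∈ U, a ≠ b ∧ ¬ H.Adj a b := by
    simpa [IsClique, Set.Pairwise] using hU'
  obtain ⟨v₁, h₁, v₂, h₂, hne, hnadj', hs₁, hs₂⟩ := hU a ha b hb hab hnadj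
  by_cases hv₁ : v₁ ∈ S
  · by_cases hv₂ : v₂ ∈ S
    · exact absurd (hS hv₁ hv₂ hne) hnadj'
    · exact ⟨v₂, h₂, hv₂, hs₂⟩
  · exact ⟨v₁, h₁, hv₁, hs₁⟩

variable [DecidableEq V]

structure Separates (H : SimpleGraph V) (W S : Finset V) (a b : V) : Prop where
  subset : S ⊆ W
  left_notMem : a ∉ S
  right_notMem : b ∉ S
  not_reachIn : ¬ ReachIn H (W \ S) a b

lemma Separates.symm (h : Separates H W S a b) : Separates H W S b a :=
  ⟨h.subset, h.right_notMem, h.left_notMem, fun hr => h.not_reachIn hr.symm⟩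

lemma exists_minimal_separates (hab : a ≠ b) (hnadj : ¬ H.Adj a b) :
    ∃ S, Separates H W S a b ∧ ∀ s ∈ S, ¬ Separates H W (S.erase s) a b := by
  have hall : Separates H W ((W.erase a).erase b) a b := by
    refine ⟨(erase_subset _ _).trans (erase_subset _ _), by simp, by simp, fun h => ?_⟩
    rcases h.cases_head with rfl | ⟨c, ⟨-, hc, hac⟩, -⟩
    · exact hab rfl
    · have : c = a ∨ c = b := by simp at hc; tauto
      rcases this with rfl | rfl
      exacts [H.irrefl hac, hnadj hac]
  obtain ⟨S, hS, hmin⟩ := (measure Finset.card).wf.has_min {S | Separates H W S a b} ⟨_, hall⟩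
  exact ⟨S, hS, fun s hs h => hmin _ h (card_erase_lt_of_mem hs)⟩

lemma Separates.exists_adj_of_minimal (hS : Separates H W S a b) (ha : a ∈ W)
    (hmin : ∀ s ∈ S, ¬ Separates H W (S.erase s) a b) {s : V} (hs : s ∈ S) :
    ∃ x ∈ componentIn H (W \ S) a, H.Adj s x := by
  by_contra! hno
  have hcomp : ∀ y, ReachIn H (W \ S.erase s) a y → y ∈ componentIn H (W \ S) a := by
    intro y hy
    induction hy with
    | refl => exact self_mem_componentIn (mem_sdiff.mpr ⟨ha, hS.left_notMem⟩)
    | @tail p r _ hstep ih =>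
      obtain ⟨-, hr, hpr⟩ := hstep
      have hrS : r ∉ S := fun hrS => by
        by_cases hrs : r = s
        · exact hno p ih (hrs ▸ hpr.symm)
        · exact (mem_sdiff.mp hr).2 (mem_erase.mpr ⟨hrs, hrS⟩)
      exact mem_componentIn_of_adj ih (mem_sdiff.mpr ⟨(mem_sdiff.mp hr).1, hrS⟩) hpr
  exact hmin s hs
    { subset := (erase_subset s S).trans hS.subset
      left_notMem := fun h => hS.left_notMem (mem_of_mem_erase h)
      right_notMem := fun h => hS.right_notMem (mem_of_mem_erase h)
      not_reachIn := fun hr => hS.not_reachIn (mem_componentIn.mp (hcomp b hr)).2 }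

/-- Two non-adjacent vertices of `S` would be joined by induced paths through the components
of `a` and of `b`, which together form an induced cycle of length at least four. -/
lemma Chordal.isClique_of_minimal_separates (hch : Chordal H) (hS : Separates H W S a b)
    (ha : a ∈ W) (hb : b ∈ W) (hmin : ∀ s ∈ S, ¬ Separates H W (S.erase s) a b) :
    H.IsClique (S : Set V) := by
  intro s₁ h₁ s₂ h₂ hne
  by_contra hnadj
  have hminB : ∀ s ∈ S, ¬ Separates H W (S.erase s) b a := fun s hs h => hmin s hs h.symm
  obtain ⟨x₁, hx₁, h₁x⟩ := hS.exists_adj_of_minimal ha hmin h₁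
  obtain ⟨x₂, hx₂, h₂x⟩ := hS.exists_adj_of_minimal ha hmin h₂
  obtain ⟨y₁, hy₁, h₁y⟩ := hS.symm.exists_adj_of_minimal hb hminB h₁
  obtain ⟨y₂, hy₂, h₂y⟩ := hS.symm.exists_adj_of_minimal hb hminB h₂
  obtain ⟨P, hP⟩ := (reachIn_componentIn hx₁ hx₂).exists_isWalkVia hx₁ h₁x h₂x.symm
  obtain ⟨Q, hQ⟩ := (reachIn_componentIn hy₁ hy₂).exists_isWalkVia hy₁ h₁y h₂y.symm
  obtain ⟨P, hP, hP3, hPi⟩ := hP.exists_isInducedPath hnadj hne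
  obtain ⟨Q, hQ, hQ3, hQi⟩ := hQ.exists_isInducedPath hnadj hne
  have hnotMem : ∀ s ∈ S, s ∉ componentIn H (W \ S) b :=
    fun s hs h => (mem_sdiff.mp (componentIn_subset h)).2 hs
  exact not_chordal_of_induced_paths
    (fun x hx y hy => ne_and_not_adj_of_mem_componentIn hS.not_reachIn hx hy)
    (hnotMem _ h₁) (hnotMem _ h₂) hP hQ hP3 hQ3 hPi hQi hch

/-- Dirac's lemma. Split `W` along a minimal `a`–`b` separator `S`, which is a clique; for the
component `C` of `a` (and likewise of `b`), a simplicial vertex of `H[C ∪ S]` outside `S` is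
simplicial in `H[W]`. -/
theorem Chordal.exists_isSimplicialIn_pair (hch : Chordal H) (W : Finset V) :
    ∀ a ∈ W, ∀ b ∈ W, a ≠ b → ¬ H.Adj a b → ∃ v₁ ∈ W, ∃ v₂ ∈ W,
      v₁ ≠ v₂ ∧ ¬ H.Adj v₁ v₂ ∧ IsSimplicialIn H W v₁ ∧ IsSimplicialIn H W v₂ := by
  induction W using Finset.strongInduction with
  | _ W ih =>
  intro a ha b hb hab hnadj
  obtain ⟨S, hS, hmin⟩ := exists_minimal_separates (W := W) hab hnadj
  have hclique := hch.isClique_of_minimal_separates hS ha hb hmin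
  have side : ∀ {c d}, Separates H W S c d → c ∈ W → d ∈ W →
      ∃ v ∈ componentIn H (W \ S) c, IsSimplicialIn H W v := by
    intro c d hcd hc hd
    set C := componentIn H (W \ S) c
    have hcC : c ∈ C := self_mem_componentIn (mem_sdiff.mpr ⟨hc, hcd.left_notMem⟩)
    have hdC : d ∉ C := fun h => hcd.not_reachIn (mem_componentIn.mp h).2
    have hsub : C ∪ S ⊂ W :=
      (ssubset_iff_of_subset (union_subset (componentIn_subset.trans sdiff_subset) hcd.subset)).mpr
        ⟨d, hd, fun h => (mem_union.mp h).elim hdC hcd.right_notMem⟩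
    obtain ⟨v, hvU, hvS, hv⟩ :=
      exists_isSimplicialIn_notMem (ih _ hsub) hclique (mem_union_left _ hcC) hcd.left_notMem
    have hvC : v ∈ C := (mem_union.mp hvU).resolve_right hvS
    refine ⟨v, hvC, hv.of_subset fun x hx hvx => ?_⟩
    by_cases hxS : x ∈ S
    · exact mem_union_right _ hxS
    · exact mem_union_left _ (mem_componentIn_of_adj hvC (mem_sdiff.mpr ⟨hx, hxS⟩) hvx)
  obtain ⟨v₁, h₁, hs₁⟩ := side hS ha hb
  obtain ⟨v₂, h₂, hs₂⟩ := side hS.symm hb ha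
  obtain ⟨hne, hnadj'⟩ := ne_and_not_adj_of_mem_componentIn hS.not_reachIn h₁ h₂
  exact ⟨v₁, (mem_sdiff.mp (componentIn_subset h₁)).1, v₂,
    (mem_sdiff.mp (componentIn_subset h₂)).1, hne, hnadj', hs₁, hs₂⟩

end Dirac

section UpperBound

open SimpleGraph

variable {V : Type*} [DecidableEq V] {G : SimpleGraph V}

lemma theta_le_one_of_chordal_compl (hch : Chordal Gᶜ) (W : Finset V) :
    theta (indComplexOn G W) ≤ 1 := by
  classical
  induction W using Finset.strongInduction with
  | _ W ih =>
  by_cases hW : IsIndepSet G W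
  · rw [theta_indComplexOn_eq_zero hW]
    omega
  obtain ⟨a, ha, b, hb, hab⟩ : ∃ a ∈ W, ∃ b ∈ W, G.Adj a b := by
    simpa [IsIndepSet] using hW
  obtain ⟨v, hvW, u, huW, hne, hnadj, hv, -⟩ :=
    hch.exists_isSimplicialIn_pair W a ha b hb hab.ne (by simp [hab])
  have hvu : G.Adj v u := by simpa [hne] using hnadj
  have hnc : v ∈ nonConeF (indComplexOn G W) :=
    mem_nonConeF_indComplexOn.mpr ⟨hvW, u, huW, hvu⟩
  refine theta_le_of_mem_nonConeF hnc ?_ ?_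
  · rw [delF_indComplexOn]
    exact ih _ (Finset.erase_ssubset hvW)
  rw [lkF_indComplexOn hvW, theta_indComplexOn_eq_zero]
  intro x hx y hy hxy
  have hcompl : ∀ z ∈ (W.erase v).filter fun u => ¬ G.Adj v u, z ∈ W ∧ Gᶜ.Adj v z := by
    intro z hz
    obtain ⟨⟨hzv, hzW⟩, hvz⟩ := Finset.mem_filter.mp hz |>.imp_left Finset.mem_erase.mp
    exact ⟨hzW, (compl_adj G v z).mpr ⟨Ne.symm hzv, hvz⟩⟩
  exact ((compl_adj G x y).mp (hv (hcompl x hx) (hcompl y hy) hxy.ne)).2 hxy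

end UpperBound

variable {X : Finset (Finset α)}

theorem cochordal_iff_theta_eq_one {V : Type*} [Fintype V] [DecidableEq V] (G : SimpleGraph V)
    (hE : ∃ x y, G.Adj x y) :
    Chordal Gᶜ ↔ thetaG G = 1 := by
  rw [thetaG, indComplex_eq_indComplexOn_univ]
  constructor
  · intro hch
    obtain ⟨x, y, hxy⟩ := hE
    have hx : x ∈ nonConeF (indComplexOn G Finset.univ) :=
      mem_nonConeF_indComplexOn.mpr ⟨Finset.mem_univ x, y, Finset.mem_univ y, hxy⟩
    exact le_antisymm (theta_le_one_of_chordal_compl hch _) (one_le_theta ⟨x, hx⟩)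
  · intro h
    by_contra hch
    obtain ⟨n, hn, ⟨e⟩⟩ : ∃ n, 3 < n ∧ Nonempty (SimpleGraph.cycleGraph n ↪g Gᶜ) := by
      simpa [Chordal] using hch
    have := two_le_theta_of_cycle_compl hn e _ fun i => Finset.mem_univ (e i)
    omega

end ThetaPaper
end
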